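/- arXiv:math/0510181 — 2 statements merged into one kernel-verified Lean document; each statement's English description precedes it below -/
import Mathlib

section
/- Mehler's formula: for 0 < q < 1 and all real x, y, Σ_{n=0}^{∞} (H_n(x) H_n(y) / (2^n n!)) q^n = (1-q²)^{-1/2} exp( -q²(x²+y²)/(1-q²) + 2qxy/(1-q²) ), where H_n are the physicists' Hermite polynomials. -/
/-!
The key identity is the integral representation `2ⁿ ∫ (x + i t)ⁿ e^{-t²} dt = √π Hₙ(x)`:
integration by parts against `t e^{-t²}` gives the integral the three-term recurrence
`Hₙ₊₁ = 2x Hₙ - 2n Hₙ₋₁`, which the Hermite polynomials inherit from `(e^{-x²})' = -2x e^{-x²}`.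
Hence `π Hₙ(x) Hₙ(y) qⁿ / (2ⁿ n!)` is the integral over `ℝ²` of `(2qab)ⁿ / n! · e^{-s²-t²}`, where
`a = x + i s` and `b = y + i t`. As `2|q||a||b| ≤ |q| (|a|² + |b|²)`, for `|q| < 1` the series of
absolute values is dominated by an integrable Gaussian, so the sum can be taken inside the
integral, where it is the exponential series. The resulting Gaussian integral of
`exp (2qab - s² - t²)` is evaluated by completing the square, first in `t` and then in `s`.
-/

/-- The physicists' Hermite polynomials via the Rodrigues formula
`H_n(x) = (-1)^n e^{x²} (d/dx)^n e^{-x²}`. -/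
noncomputable def physHermite (n : ℕ) (x : ℝ) : ℝ :=
  (-1) ^ n * Real.exp (x ^ 2) * iteratedDeriv n (fun t : ℝ => Real.exp (-t ^ 2)) x

open MeasureTheory Complex
open scoped Real

local notation "γ" => fun t : ℝ => Real.exp (-t ^ 2)

lemma hasDerivAt_iteratedDeriv_gaussian (n : ℕ) (x : ℝ) :
    HasDerivAt (iteratedDeriv n γ) (iteratedDeriv (n + 1) γ x) x := by
  rw [iteratedDeriv_succ]
  exact ((ContDiff.differentiable_iteratedDeriv n (by fun_prop : ContDiff ℝ ⊤ γ)
    (WithTop.coe_lt_top _)) x).hasDerivAt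

lemma iteratedDeriv_one_gaussian (x : ℝ) :
    iteratedDeriv 1 γ x = -2 * x * Real.exp (-x ^ 2) := by
  rw [iteratedDeriv_one, ((hasDerivAt_pow 2 x).fun_neg.exp).deriv]
  ring

/-- At `n = 0` the index `n - 1` truncates to `0`, harmlessly since that term has coefficient `0`;
`physHermite_succ`, `integral_mul_pow_mul_cexp_neg_sq` and `hermiteIntegral_succ` follow the same
convention. -/
lemma iteratedDeriv_gaussian_succ (n : ℕ) (x : ℝ) :
    iteratedDeriv (n + 1) γ x =
      -2 * x * iteratedDeriv n γ x - 2 * n * iteratedDeriv (n - 1) γ x := by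
  induction n generalizing x with
  | zero => simp [iteratedDeriv_one_gaussian]
  | succ n ih =>
    have hlow : HasDerivAt (fun x => 2 * (n : ℝ) * iteratedDeriv (n - 1) γ x)
        (2 * n * iteratedDeriv n γ x) x := by
      rcases n with _ | n
      · simpa using hasDerivAt_const x (0 : ℝ)
      · exact (hasDerivAt_iteratedDeriv_gaussian n x).const_mul _
    have h := ((((hasDerivAt_id' x).const_mul (-2)).mul
      (hasDerivAt_iteratedDeriv_gaussian n x)).sub hlow).congr_of_eventuallyEq (.of_forall ih)
    rw [(hasDerivAt_iteratedDeriv_gaussian (n + 1) x).unique h]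
    push_cast
    ring

lemma physHermite_zero (x : ℝ) : physHermite 0 x = 1 := by
  simp [physHermite, ← Real.exp_add]

lemma physHermite_succ (n : ℕ) (x : ℝ) :
    physHermite (n + 1) x = 2 * x * physHermite n x - 2 * n * physHermite (n - 1) x := by
  rw [physHermite, iteratedDeriv_gaussian_succ, physHermite, physHermite]
  rcases n with _ | n
  · push_cast
    ring
  · simp only [add_tsub_cancel_right, pow_succ]
    ring

lemma integrable_of_norm_le_pow_mul_exp_neg_sq {E : Type*} [NormedAddCommGroup E] {F : ℝ → E}
    (hF : Continuous F) {a : ℝ} (ha : 0 ≤ a) (n : ℕ)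
    (hle : ∀ t, ‖F t‖ ≤ (a + |t|) ^ n * Real.exp (-t ^ 2)) : Integrable F := by
  refine ((integrable_exp_neg_mul_sq (by norm_num : (0 : ℝ) < 1 / 2)).const_mul
    (n.factorial * Real.exp (a + 1 / 2))).mono' hF.aestronglyMeasurable (.of_forall fun t => ?_)
  have hpow : (a + |t|) ^ n ≤ n.factorial * Real.exp (a + |t|) := by
    have := Real.pow_div_factorial_le_exp (a + |t|) (by positivity) n
    rwa [div_le_iff₀' (by positivity)] at this
  -- `|t| ≤ 1/2 + t²/2` lets half of the Gaussian absorb `exp |t|`.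
  have hexp : a + |t| + -t ^ 2 ≤ a + 1 / 2 + -(1 / 2) * t ^ 2 := by
    nlinarith [sq_nonneg (|t| - 1), sq_abs t]
  calc ‖F t‖ ≤ (a + |t|) ^ n * Real.exp (-t ^ 2) := hle t
    _ ≤ n.factorial * Real.exp (a + |t|) * Real.exp (-t ^ 2) := by gcongr
    _ ≤ n.factorial * Real.exp (a + 1 / 2 + -(1 / 2) * t ^ 2) := by
      rw [mul_assoc, ← Real.exp_add]; gcongr
    _ = _ := by rw [Real.exp_add]; ring

lemma norm_ofReal_add_mul_I_le (x t : ℝ) : ‖(x : ℂ) + t * I‖ ≤ |x| + |t| :=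
  (norm_add_le _ _).trans (by simp)

lemma integrable_pow_mul_cexp_neg_sq (n : ℕ) (x : ℝ) :
    Integrable fun t : ℝ => ((x : ℂ) + t * I) ^ n * cexp (-(t : ℂ) ^ 2) := by
  refine integrable_of_norm_le_pow_mul_exp_neg_sq (by fun_prop) (abs_nonneg x) n fun t => ?_
  rw [norm_mul, norm_pow, ← ofReal_pow, ← ofReal_neg, norm_exp_ofReal]
  gcongr
  exact norm_ofReal_add_mul_I_le x t

lemma integrable_mul_pow_mul_cexp_neg_sq (n : ℕ) (x : ℝ) :
    Integrable fun t : ℝ => (t : ℂ) * ((x : ℂ) + t * I) ^ n * cexp (-(t : ℂ) ^ 2) := by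
  -- `t = -I ((x + t I) - x)`
  refine (((integrable_pow_mul_cexp_neg_sq (n + 1) x).sub
    ((integrable_pow_mul_cexp_neg_sq n x).const_mul x)).const_mul (-I)).congr
    (.of_forall fun t => ?_)
  simp only [Pi.sub_apply]
  linear_combination (-(t : ℂ) * ((x : ℂ) + t * I) ^ n * cexp (-(t : ℂ) ^ 2)) * I_sq

noncomputable def hermiteIntegral (n : ℕ) (x : ℝ) : ℂ :=
  ∫ t : ℝ, ((x : ℂ) + t * I) ^ n * cexp (-(t : ℂ) ^ 2)

lemma integral_mul_pow_mul_cexp_neg_sq (n : ℕ) (x : ℝ) :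
    ∫ t : ℝ, (t : ℂ) * ((x : ℂ) + t * I) ^ n * cexp (-(t : ℂ) ^ 2)
      = n * I / 2 * hermiteIntegral (n - 1) x := by
  have hu (t : ℝ) : HasDerivAt (fun t : ℝ => ((x : ℂ) + t * I) ^ n)
      (n * ((x : ℂ) + t * I) ^ (n - 1) * I) t := by
    have := (((hasDerivAt_id (t : ℂ)).mul_const I).const_add (x : ℂ)).pow n
    simpa using this.comp_ofReal
  have hv (t : ℝ) : HasDerivAt (fun t : ℝ => -(1 / 2) * cexp (-(t : ℂ) ^ 2))
      (t * cexp (-(t : ℂ) ^ 2)) t := by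
    have := ((hasDerivAt_pow 2 (t : ℂ)).fun_neg.cexp.const_mul (-(1 / 2) : ℂ)).comp_ofReal
    convert this using 1
    push_cast; ring
  have hibp := integral_mul_deriv_eq_deriv_mul_of_integrable (fun t _ => hu t) (fun t _ => hv t)
    ?_ ?_ ?_
  · calc ∫ t : ℝ, (t : ℂ) * ((x : ℂ) + t * I) ^ n * cexp (-(t : ℂ) ^ 2)
        = ∫ t : ℝ, ((x : ℂ) + t * I) ^ n * ((t : ℂ) * cexp (-(t : ℂ) ^ 2)) := by
          congr 1; ext t; ring
      _ = ∫ t : ℝ, n * I / 2 * (((x : ℂ) + t * I) ^ (n - 1) * cexp (-(t : ℂ) ^ 2)) := by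
          rw [hibp, ← integral_neg]; congr 1; ext t; ring
      _ = _ := integral_const_mul _ _
  · exact (integrable_mul_pow_mul_cexp_neg_sq n x).congr (.of_forall fun t => by
      simp only [Pi.mul_apply]; ring)
  · refine ((integrable_pow_mul_cexp_neg_sq (n - 1) x).const_mul (-(n * I / 2))).congr
      (.of_forall fun t => ?_)
    simp only [Pi.mul_apply]
    ring
  · refine ((integrable_pow_mul_cexp_neg_sq n x).const_mul (-(1 / 2))).congr
      (.of_forall fun t => ?_)
    simp only [Pi.mul_apply]
    ring

lemma hermiteIntegral_zero (x : ℝ) : hermiteIntegral 0 x = (√π : ℝ) := by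
  have h := integral_gaussian 1
  simp only [neg_mul, one_mul, div_one] at h
  rw [hermiteIntegral, ← h, ← integral_complex_ofReal]
  simp

lemma hermiteIntegral_succ (n : ℕ) (x : ℝ) :
    hermiteIntegral (n + 1) x = x * hermiteIntegral n x - n / 2 * hermiteIntegral (n - 1) x := by
  have hsplit (t : ℝ) : ((x : ℂ) + t * I) ^ (n + 1) * cexp (-(t : ℂ) ^ 2)
      = x * (((x : ℂ) + t * I) ^ n * cexp (-(t : ℂ) ^ 2))
        + I * ((t : ℂ) * ((x : ℂ) + t * I) ^ n * cexp (-(t : ℂ) ^ 2)) := by ring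
  rw [hermiteIntegral, funext hsplit,
    integral_add ((integrable_pow_mul_cexp_neg_sq n x).const_mul _)
      ((integrable_mul_pow_mul_cexp_neg_sq n x).const_mul _),
    integral_const_mul, integral_const_mul, integral_mul_pow_mul_cexp_neg_sq, ← hermiteIntegral]
  linear_combination (n / 2 * hermiteIntegral (n - 1) x) * I_mul_I

lemma two_pow_mul_hermiteIntegral (n : ℕ) (x : ℝ) :
    2 ^ n * hermiteIntegral n x = (√π : ℝ) * (physHermite n x : ℂ) := by
  induction n using Nat.twoStepInduction with
  | zero => simp [hermiteIntegral_zero, physHermite_zero]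
  | one =>
    rw [hermiteIntegral_succ, physHermite_succ, hermiteIntegral_zero, physHermite_zero]
    push_cast
    ring
  | more n ih₀ ih₁ =>
    rw [hermiteIntegral_succ, physHermite_succ, add_tsub_cancel_right]
    push_cast
    linear_combination 2 * x * ih₁ - 2 * (n + 1) * ih₀

lemma hasSum_pow_div_factorial_mul_cexp (z w : ℂ) :
    HasSum (fun n : ℕ => z ^ n / n.factorial * w) (cexp z * w) := by
  rw [exp_eq_exp_ℂ]
  exact (NormedSpace.expSeries_div_hasSum_exp z).mul_right w

lemma hasSum_pow_div_factorial_mul_rexp (r w : ℝ) :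
    HasSum (fun n : ℕ => r ^ n / n.factorial * w) (Real.exp r * w) := by
  rw [Real.exp_eq_exp_ℝ]
  exact (NormedSpace.expSeries_div_hasSum_exp r).mul_right w

lemma integral_cexp_quadratic_of_neg {b : ℝ} (hb : b < 0) (c d : ℂ) :
    ∫ t : ℝ, cexp (b * t ^ 2 + c * t + d) = (√(π / -b) : ℝ) * cexp (d - c ^ 2 / (4 * b)) := by
  rw [integral_cexp_quadratic (by simpa using hb), Real.sqrt_eq_rpow,
    ofReal_cpow (div_nonneg Real.pi_nonneg (by linarith))]
  push_cast
  rfl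

lemma sqrt_pi_mul_sqrt_pi_div {a : ℝ} (ha : 0 ≤ a) : √π * √(π / a) = π * a ^ (-(1 : ℝ) / 2) := by
  rw [Real.sqrt_div' _ ha, ← mul_div_assoc, Real.mul_self_sqrt Real.pi_nonneg, Real.sqrt_eq_rpow,
    div_eq_mul_inv, ← Real.rpow_neg ha]
  norm_num

section Mehler

variable (q x y : ℝ)

noncomputable def mehlerKernel : ℝ :=
  (1 - q ^ 2) ^ (-(1:ℝ)/2) *
    Real.exp (-q ^ 2 * (x ^ 2 + y ^ 2) / (1 - q ^ 2) + 2 * q * x * y / (1 - q ^ 2))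

noncomputable def mehlerIntegrand (n : ℕ) (p : ℝ × ℝ) : ℂ :=
  (2 * q : ℂ) ^ n / n.factorial *
    ((((x : ℂ) + p.1 * I) ^ n * cexp (-(p.1 : ℂ) ^ 2)) *
      (((y : ℂ) + p.2 * I) ^ n * cexp (-(p.2 : ℂ) ^ 2)))

noncomputable def mehlerGaussian (p : ℝ × ℝ) : ℂ :=
  cexp (2 * q * (((x : ℂ) + p.1 * I) * ((y : ℂ) + p.2 * I)) - (p.1 : ℂ) ^ 2 - (p.2 : ℂ) ^ 2)

noncomputable def mehlerBound (p : ℝ × ℝ) : ℝ :=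
  Real.exp (2 * |q| * (‖(x : ℂ) + p.1 * I‖ * ‖(y : ℂ) + p.2 * I‖) - p.1 ^ 2 - p.2 ^ 2)

lemma hasSum_mehlerIntegrand (p : ℝ × ℝ) :
    HasSum (fun n => mehlerIntegrand q x y n p) (mehlerGaussian q x y p) := by
  convert hasSum_pow_div_factorial_mul_cexp (2 * q * (((x : ℂ) + p.1 * I) * ((y : ℂ) + p.2 * I)))
    (cexp (-(p.1 : ℂ) ^ 2) * cexp (-(p.2 : ℂ) ^ 2)) using 1
  · ext n
    simp only [mehlerIntegrand, mul_pow]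
    ring
  · rw [mehlerGaussian, sub_eq_add_neg, sub_eq_add_neg, exp_add, exp_add]
    ring

lemma hasSum_norm_mehlerIntegrand (p : ℝ × ℝ) :
    HasSum (fun n => ‖mehlerIntegrand q x y n p‖) (mehlerBound q x y p) := by
  convert hasSum_pow_div_factorial_mul_rexp (2 * |q| * (‖(x : ℂ) + p.1 * I‖ * ‖(y : ℂ) + p.2 * I‖))
    (Real.exp (-p.1 ^ 2) * Real.exp (-p.2 ^ 2)) using 1
  · ext n
    simp only [mehlerIntegrand, norm_mul, norm_div, norm_pow, Complex.norm_natCast,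
      ← ofReal_pow, ← ofReal_neg, norm_exp_ofReal, ← ofReal_ofNat, ← ofReal_mul, norm_real,
      Real.norm_eq_abs, abs_two]
    ring
  · rw [mehlerBound, sub_eq_add_neg, sub_eq_add_neg, Real.exp_add, Real.exp_add]
    ring

lemma norm_mehlerGaussian_le (p : ℝ × ℝ) : ‖mehlerGaussian q x y p‖ ≤ mehlerBound q x y p :=
  (hasSum_mehlerIntegrand q x y p).tsum_eq ▸ (hasSum_norm_mehlerIntegrand q x y p).tsum_eq ▸
    norm_tsum_le_tsum_norm (hasSum_norm_mehlerIntegrand q x y p).summable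

lemma mehlerBound_le (p : ℝ × ℝ) :
    mehlerBound q x y p ≤
      Real.exp (|q| * (x ^ 2 + y ^ 2)) *
        (Real.exp (-(1 - |q|) * p.1 ^ 2) * Real.exp (-(1 - |q|) * p.2 ^ 2)) := by
  rw [mehlerBound, ← Real.exp_add, ← Real.exp_add]
  gcongr
  have ha := normSq_add_mul_I x p.1
  have hb := normSq_add_mul_I y p.2
  rw [← Complex.sq_norm] at ha hb
  have hamgm : 2 * |q| * (‖(x : ℂ) + p.1 * I‖ * ‖(y : ℂ) + p.2 * I‖)
      ≤ |q| * (‖(x : ℂ) + p.1 * I‖ ^ 2 + ‖(y : ℂ) + p.2 * I‖ ^ 2) := by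
    nlinarith [mul_nonneg (abs_nonneg q) (sq_nonneg (‖(x : ℂ) + p.1 * I‖ - ‖(y : ℂ) + p.2 * I‖))]
  rw [ha, hb] at hamgm
  linarith

lemma integral_mehlerIntegrand (n : ℕ) :
    ∫ p, mehlerIntegrand q x y n p =
      π * ((physHermite n x * physHermite n y / (2 ^ n * n.factorial) * q ^ n : ℝ) : ℂ) := by
  simp only [mehlerIntegrand]
  rw [integral_const_mul, Measure.volume_eq_prod,
    integral_prod_mul (fun s : ℝ => ((x : ℂ) + s * I) ^ n * cexp (-(s : ℂ) ^ 2))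
      (fun t : ℝ => ((y : ℂ) + t * I) ^ n * cexp (-(t : ℂ) ^ 2)), ← hermiteIntegral,
    ← hermiteIntegral]
  have hx := two_pow_mul_hermiteIntegral n x
  have hy := two_pow_mul_hermiteIntegral n y
  have hpi : ((√π : ℝ) : ℂ) ^ 2 = π := by rw [← ofReal_pow, Real.sq_sqrt Real.pi_nonneg]
  push_cast
  field_simp
  linear_combination ((q : ℂ) ^ n / n.factorial) * (2 ^ n * hermiteIntegral n y * hx
    + (√π : ℝ) * (physHermite n x : ℂ) * hy)
    + ((q : ℂ) ^ n * physHermite n x * physHermite n y / n.factorial) * hpi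

lemma integral_mehlerGaussian_prodMk (s : ℝ) :
    ∫ t, mehlerGaussian q x y (s, t) = (√π : ℝ) * cexp ((q ^ 2 - 1 : ℝ) * s ^ 2
      + 2 * q * (y - q * x) * I * s + (2 * q * x * y - q ^ 2 * x ^ 2)) := by
  have hquad (t : ℝ) : mehlerGaussian q x y (s, t) = cexp ((-1 : ℝ) * t ^ 2
      + 2 * q * (x + s * I) * I * t + (2 * q * (x + s * I) * y - s ^ 2)) := by
    rw [mehlerGaussian]
    push_cast
    ring_nf
  rw [funext hquad, integral_cexp_quadratic_of_neg (by norm_num), neg_neg, div_one]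
  congr 2
  push_cast
  linear_combination
    ((q : ℂ) ^ 2 * x ^ 2 + 2 * q ^ 2 * x * s * I + q ^ 2 * s ^ 2 * (I ^ 2 - 1)) * I_sq

variable {q}

lemma integrable_mehlerBound (hq : |q| < 1) : Integrable (mehlerBound q x y) := by
  have hpos : 0 < 1 - |q| := by linarith
  have hcont : Continuous (mehlerBound q x y) := by unfold mehlerBound; fun_prop
  refine (((integrable_exp_neg_mul_sq hpos).mul_prod (integrable_exp_neg_mul_sq hpos)).const_mul
    (Real.exp (|q| * (x ^ 2 + y ^ 2)))).mono' hcont.aestronglyMeasurable (.of_forall fun p => ?_)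
  exact (Real.norm_of_nonneg (Real.exp_nonneg _)).trans_le (mehlerBound_le q x y p)

lemma integrable_mehlerGaussian (hq : |q| < 1) : Integrable (mehlerGaussian q x y) := by
  have hcont : Continuous (mehlerGaussian q x y) := by unfold mehlerGaussian; fun_prop
  exact (integrable_mehlerBound x y hq).mono' hcont.aestronglyMeasurable
    (.of_forall (norm_mehlerGaussian_le q x y))

lemma hasSum_integral_mehlerIntegrand (hq : |q| < 1) :
    HasSum (fun n => ∫ p, mehlerIntegrand q x y n p) (∫ p, mehlerGaussian q x y p) :=
  hasSum_integral_of_dominated_convergence (fun n p => ‖mehlerIntegrand q x y n p‖)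
    (fun n => (by unfold mehlerIntegrand; fun_prop : Continuous _).aestronglyMeasurable)
    (fun n => .of_forall fun p => le_rfl)
    (.of_forall fun p => (hasSum_norm_mehlerIntegrand q x y p).summable)
    (by simpa only [(hasSum_norm_mehlerIntegrand q x y _).tsum_eq] using
      integrable_mehlerBound x y hq)
    (.of_forall (hasSum_mehlerIntegrand q x y))

lemma integral_mehlerGaussian (hq : |q| < 1) :
    ∫ p, mehlerGaussian q x y p = π * (mehlerKernel q x y : ℂ) := by
  have hq2 : q ^ 2 - 1 < 0 := by nlinarith [sq_abs q, abs_nonneg q]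
  have hne : (q ^ 2 - 1 : ℂ) ≠ 0 := by exact_mod_cast hq2.ne
  have hne' : (1 - q ^ 2 : ℂ) ≠ 0 := by rw [← neg_sub]; exact neg_ne_zero.mpr hne
  rw [Measure.volume_eq_prod, integral_prod _ (integrable_mehlerGaussian x y hq)]
  simp only [integral_mehlerGaussian_prodMk]
  rw [integral_const_mul, integral_cexp_quadratic_of_neg hq2, ← mul_assoc, ← ofReal_mul,
    neg_sub, sqrt_pi_mul_sqrt_pi_div (by linarith), mehlerKernel, ofReal_mul, ofReal_mul,
    mul_assoc, ofReal_exp, mul_pow, I_sq]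
  congr 3
  push_cast
  field_simp
  ring

theorem hasSum_mehler (hq : |q| < 1) :
    HasSum (fun n : ℕ => physHermite n x * physHermite n y / (2 ^ n * n.factorial) * q ^ n)
      (mehlerKernel q x y) := by
  have h := hasSum_integral_mehlerIntegrand x y hq
  simp only [integral_mehlerIntegrand, integral_mehlerGaussian x y hq] at h
  rw [← hasSum_ofReal]
  simpa [Real.pi_ne_zero] using h.mul_left (π : ℂ)⁻¹

end Mehler

theorem mehler_formula (q x y : ℝ) (hq0 : 0 < q) (hq1 : q < 1) :
    ∑' n : ℕ, (physHermite n x * physHermite n y / (2 ^ n * n.factorial)) * q ^ n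
      = (1 - q ^ 2) ^ (-(1:ℝ)/2) *
        Real.exp (-q ^ 2 * (x ^ 2 + y ^ 2) / (1 - q ^ 2) + 2 * q * x * y / (1 - q ^ 2)) :=
  (hasSum_mehler x y (abs_lt.mpr ⟨by linarith, hq1⟩)).tsum_eq
end

section
/- For real a ≠ 0, ∫_{-∞}^{∞} cos(a t) / (cosh(2t) + 1) dt = (πa/2) / sinh(πa/2). -/
/-!
Substituting `x = σ(2t)`, with `σ` the logistic sigmoid, gives `dx = dt / (cosh 2t + 1)` and
`x ^ z (1 - x) ^ (-z) = exp (2 t z)`, so `∫ exp (2 t z) / (cosh 2t + 1) dt` is the Beta integral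
`B(1 + z, 1 - z) = Γ(1 + z) Γ(1 - z) = π z / sin (π z)`. For `z = i a / 2` the real part of the
left side is the cosine integral and the right side is `(π a / 2) / sinh (π a / 2)`.
-/

open MeasureTheory Set Real

namespace Real

lemma sigmoid_mul_sigmoid_neg (x : ℝ) : sigmoid x * sigmoid (-x) = (2 * (cosh x + 1))⁻¹ := by
  rw [sigmoid_def, sigmoid_def, neg_neg, ← mul_inv, cosh_eq]
  congr 1
  have hexp : rexp x * rexp (-x) = 1 := by rw [← Real.exp_add, add_neg_cancel, Real.exp_zero]
  linear_combination hexp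

lemma hasDerivAt_sigmoid_two_mul (t : ℝ) :
    HasDerivAt (fun t ↦ sigmoid (2 * t)) (cosh (2 * t) + 1)⁻¹ t := by
  refine ((hasDerivAt_sigmoid (2 * t)).comp t ((hasDerivAt_id t).const_mul 2)).congr_deriv ?_
  rw [← sigmoid_neg, sigmoid_mul_sigmoid_neg, mul_inv, mul_one]
  field_simp

lemma range_sigmoid_two_mul : range (fun t ↦ sigmoid (2 * t)) = Ioo 0 1 := by
  rw [← range_sigmoid]
  exact (mul_left_surjective₀ two_ne_zero).range_comp sigmoid

end Real

section SigmoidSubstitution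

variable {E : Type*} [NormedAddCommGroup E] [NormedSpace ℝ E]

lemma integrableOn_Ioo_zero_one_iff_integrable_sigmoid_two_mul (g : ℝ → E) :
    IntegrableOn g (Ioo 0 1) ↔
      Integrable (fun t : ℝ ↦ (cosh (2 * t) + 1)⁻¹ • g (sigmoid (2 * t))) := by
  rw [← range_sigmoid_two_mul, ← image_univ, ← integrableOn_univ]
  have hpos (t : ℝ) : |(cosh (2 * t) + 1)⁻¹| = (cosh (2 * t) + 1)⁻¹ :=
    abs_of_pos (by positivity)
  simpa only [hpos] using integrableOn_image_iff_integrableOn_abs_deriv_smul MeasurableSet.univ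
    (fun t _ ↦ (hasDerivAt_sigmoid_two_mul t).hasDerivWithinAt)
    ((sigmoid_strictMono.comp (strictMono_mul_left_of_pos two_pos)).injective.injOn) g

lemma integral_Ioo_zero_one_eq_integral_sigmoid_two_mul (g : ℝ → E) :
    ∫ x in Ioo 0 1, g x = ∫ t : ℝ, (cosh (2 * t) + 1)⁻¹ • g (sigmoid (2 * t)) := by
  rw [← range_sigmoid_two_mul, ← image_univ]
  have hpos (t : ℝ) : |(cosh (2 * t) + 1)⁻¹| = (cosh (2 * t) + 1)⁻¹ :=
    abs_of_pos (by positivity)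
  simpa only [hpos, Measure.restrict_univ] using integral_image_eq_integral_abs_deriv_smul
    MeasurableSet.univ (fun t _ ↦ (hasDerivAt_sigmoid_two_mul t).hasDerivWithinAt)
    ((sigmoid_strictMono.comp (strictMono_mul_left_of_pos two_pos)).injective.injOn) g

end SigmoidSubstitution

namespace Complex

lemma ofReal_exp_cpow (x : ℝ) (w : ℂ) : (Real.exp x : ℂ) ^ w = exp (x * w) := by
  rw [cpow_def_of_ne_zero (by exact_mod_cast (Real.exp_pos x).ne'),
    ← ofReal_log (Real.exp_pos x).le, Real.log_exp]

lemma ofReal_sigmoid_cpow_mul_one_sub_cpow_neg (x : ℝ) (z : ℂ) :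
    (sigmoid x : ℂ) ^ z * (1 - sigmoid x : ℂ) ^ (-z) = exp (x * z) := by
  have hσ : (sigmoid x : ℂ) ≠ 0 := by exact_mod_cast (sigmoid_pos x).ne'
  rw [← ofReal_one, ← ofReal_sub, ← sigmoid_neg, ← sigmoid_mul_rexp_neg, ofReal_mul,
    mul_cpow_ofReal_nonneg (sigmoid_pos x).le (Real.exp_pos _).le, ← mul_assoc, ← cpow_add _ _ hσ,
    add_neg_cancel, cpow_zero, one_mul, ofReal_exp_cpow, ofReal_neg, neg_mul_neg]

lemma betaIntegral_one_add_one_sub_eq_integral (z : ℂ) :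
    betaIntegral (1 + z) (1 - z) = ∫ t : ℝ, (Real.cosh (2 * t) + 1)⁻¹ • exp (2 * t * z) := by
  rw [betaIntegral, intervalIntegral.integral_of_le zero_le_one, integral_Ioc_eq_integral_Ioo,
    integral_Ioo_zero_one_eq_integral_sigmoid_two_mul]
  simp only [add_sub_cancel_left, sub_sub_cancel_left, ofReal_sigmoid_cpow_mul_one_sub_cpow_neg,
    ofReal_mul, ofReal_ofNat]

lemma integrable_inv_cosh_add_one_smul_exp {z : ℂ} (hz : |z.re| < 1) :
    Integrable (fun t : ℝ ↦ (Real.cosh (2 * t) + 1)⁻¹ • exp (2 * t * z)) := by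
  obtain ⟨hlt, hgt⟩ := abs_lt.1 hz
  have hbeta := (betaIntegral_convergent (u := 1 + z) (v := 1 - z) (by simp; linarith)
    (by simp; linarith)).1.mono_set Ioo_subset_Ioc_self
  simpa only [integrableOn_Ioo_zero_one_iff_integrable_sigmoid_two_mul, add_sub_cancel_left,
    sub_sub_cancel_left, ofReal_sigmoid_cpow_mul_one_sub_cpow_neg, ofReal_mul, ofReal_ofNat]
    using hbeta

lemma betaIntegral_one_add_one_sub {z : ℂ} (hz : z ≠ 0) (hre : |z.re| < 1) :
    betaIntegral (1 + z) (1 - z) = π * z / sin (π * z) := by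
  obtain ⟨hlt, hgt⟩ := abs_lt.1 hre
  have hΓ := Gamma_mul_Gamma_eq_betaIntegral (s := 1 + z) (t := 1 - z) (by simp; linarith)
    (by simp; linarith)
  rw [add_add_sub_cancel, Gamma_add_one 1 one_ne_zero, Gamma_one, mul_one, one_mul, add_comm 1 z,
    Gamma_add_one z hz, mul_assoc, Gamma_mul_Gamma_one_sub] at hΓ
  rw [add_comm 1 z, ← hΓ]
  ring

lemma betaIntegral_one_add_mul_I_one_sub {b : ℝ} (hb : b ≠ 0) :
    betaIntegral (1 + b * I) (1 - b * I) = (π * b / Real.sinh (π * b) : ℝ) := by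
  rw [betaIntegral_one_add_one_sub (by simpa using hb) (by simp), ← mul_assoc,
    ← ofReal_mul, sin_mul_I, ← ofReal_sinh, mul_div_mul_right _ _ I_ne_zero, ofReal_div]

end Complex

theorem cosh_fourier_integral (a : ℝ) (ha : a ≠ 0) :
    ∫ t : ℝ, Real.cos (a * t) / (Real.cosh (2 * t) + 1)
      = (Real.pi * a / 2) / Real.sinh (Real.pi * a / 2) := by
  set z : ℂ := (a / 2 : ℝ) * Complex.I with hz
  have hre (t : ℝ) : Real.cos (a * t) / (Real.cosh (2 * t) + 1)
      = ((Real.cosh (2 * t) + 1)⁻¹ • Complex.exp (2 * t * z)).re := by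
    rw [Complex.smul_re, show 2 * t * z = (a * t : ℝ) * Complex.I by rw [hz]; push_cast; ring,
      Complex.exp_ofReal_mul_I_re, smul_eq_mul, div_eq_inv_mul]
  calc ∫ t : ℝ, Real.cos (a * t) / (Real.cosh (2 * t) + 1)
      = (∫ t : ℝ, (Real.cosh (2 * t) + 1)⁻¹ • Complex.exp (2 * t * z)).re := by
        simp only [hre]
        exact integral_re (Complex.integrable_inv_cosh_add_one_smul_exp (by simp [hz]))
    _ = (Real.pi * a / 2) / Real.sinh (Real.pi * a / 2) := by
        rw [← Complex.betaIntegral_one_add_one_sub_eq_integral,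
          Complex.betaIntegral_one_add_mul_I_one_sub (by simpa using ha), Complex.ofReal_re]
        simp only [mul_div_assoc]
end
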